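/- arXiv:1108.3970 — 6 statements merged into one kernel-verified Lean document; each statement's English description precedes it below -/
import Mathlib

section
/- Let J = q·m with q, m positive. For every fold index k < q and every offset c ∈ ZMod J, the map from Fin m to ZMod m sending i to π((k·m + i : ZMod J) + c) is a bijection. Consequently, if a perfect access pattern of the unfolded circulant bipartite graph is given by a pair of offsets (c₀, c₁) ∈ L × L (node v reading from memory units v + c₀ and v + c₁), then within each fold the folded endpoints on each port hit every element of ZMod m exactly once, i.e., the folded schedule is a perfect access pattern on the J/q physical memory units. (Theorem 1: folding a perfect access pattern by ANY factor q dividing J yields a folded perfect access pattern.) -/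
/-- The fold map `π : ZMod J → ZMod m`, the natural ring reduction (well defined
since `m` divides `J = q * m`). -/
def foldMap (J q m : ℕ) (hJ : J = q * m) : ZMod J →+* ZMod m :=
  ZMod.castHom (show m ∣ J by rw [hJ]; exact dvd_mul_left m q) (ZMod m)

/-! Reduction mod `m` kills the fold base `k * m`, so on the `k`-th fold the folded map is a
translate of the canonical bijection `Fin m → ZMod m`. -/

theorem ZMod.bijective_natCast_val_add {m : ℕ} [NeZero m] (a : ZMod m) :
    Function.Bijective (fun i : Fin m => ((i : ℕ) : ZMod m) + a) := by
  have hinj : Function.Injective (fun i : Fin m => ((i : ℕ) : ZMod m) + a) := by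
    intro i j hij
    have hval := congrArg ZMod.val (add_right_cancel hij)
    rw [ZMod.val_cast_of_lt i.isLt, ZMod.val_cast_of_lt j.isLt] at hval
    exact Fin.ext hval
  exact (Fintype.bijective_iff_injective_and_card _).mpr ⟨hinj, by simp [ZMod.card]⟩

theorem foldMap_fold_add (J q m : ℕ) (hJ : J = q * m) (k i : ℕ) (c : ZMod J) :
    foldMap J q m hJ (((k * m + i : ℕ) : ZMod J) + c) = (i : ZMod m) + foldMap J q m hJ c := by
  rw [map_add, map_natCast, Nat.cast_add, Nat.cast_mul, ZMod.natCast_self, mul_zero, zero_add]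

theorem folded_perfect_access_pattern_general (J q m : ℕ) (hm : 0 < m)
    (hJ : J = q * m) (L : Finset (ZMod J)) :
    (∀ k : ℕ, k < q → ∀ c : ZMod J,
      Function.Bijective (fun i : Fin m =>
        foldMap J q m hJ (((k * m + (i : ℕ) : ℕ) : ZMod J) + c))) ∧
    (∀ c₀ ∈ L, ∀ c₁ ∈ L, ∀ k : ℕ, k < q →
      Function.Bijective (fun i : Fin m =>
        foldMap J q m hJ (((k * m + (i : ℕ) : ℕ) : ZMod J) + c₀)) ∧
      Function.Bijective (fun i : Fin m =>
        foldMap J q m hJ (((k * m + (i : ℕ) : ℕ) : ZMod J) + c₁))) := by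
  have : NeZero m := ⟨hm.ne'⟩
  have fold_bijective (k : ℕ) (c : ZMod J) : Function.Bijective (fun i : Fin m =>
      foldMap J q m hJ (((k * m + (i : ℕ) : ℕ) : ZMod J) + c)) := by
    simpa only [foldMap_fold_add] using ZMod.bijective_natCast_val_add (foldMap J q m hJ c)
  exact ⟨fun k _ c => fold_bijective k c,
    fun c₀ _ c₁ _ k _ => ⟨fold_bijective k c₀, fold_bijective k c₁⟩⟩

/-- **Theorem 1** (folding a perfect access pattern by ANY factor `q` dividing `J`
yields a folded perfect access pattern).  For every fold index `k < q` and every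
offset `c ∈ ZMod J`, the map `Fin m → ZMod m`, `i ↦ π((k·m + i) + c)` is a
bijection.  Consequently, for a perfect access pattern given by offsets
`(c₀, c₁) ∈ L × L`, within each fold the folded endpoints on each port hit every
element of `ZMod m` exactly once. -/
theorem folded_perfect_access_pattern (J q m : ℕ) (hq : 0 < q) (hm : 0 < m)
    (hJ : J = q * m) (L : Finset (ZMod J)) :
    (∀ k : ℕ, k < q → ∀ c : ZMod J,
      Function.Bijective (fun i : Fin m =>
        foldMap J q m hJ (((k * m + (i : ℕ) : ℕ) : ZMod J) + c))) ∧
    (∀ c₀ ∈ L, ∀ c₁ ∈ L, ∀ k : ℕ, k < q →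
      Function.Bijective (fun i : Fin m =>
        foldMap J q m hJ (((k * m + (i : ℕ) : ℕ) : ZMod J) + c₀)) ∧
      Function.Bijective (fun i : Fin m =>
        foldMap J q m hJ (((k * m + (i : ℕ) : ℕ) : ZMod J) + c₁))) :=
  folded_perfect_access_pattern_general J q m hm hJ L
end

section
/- Let J, α be positive natural numbers and let L be a set of offsets d with 0 ≤ d < J. For every i with 0 ≤ i < J and every d ∈ L, the edge of the original circulant bipartite graph from left vertex i to right vertex (i + d) mod J, when the vertex labels are viewed in ZMod (J + α), has difference ((i + d) mod J) − i (computed in ZMod (J + α)) equal either to d or to d + α. Consequently, taking L' = { (d : ZMod (J+α)) : d ∈ L } ∪ { (d + α : ZMod (J+α)) : d ∈ L }, the circulant balanced bipartite graph of order J + α with connection set L' contains every edge of the original graph, and its regular degree |L'| is at most 2·|L|. (Correctness of the circulant-graph expansion used to handle a prime number of nodes: the expanded graph is circulant with node degree at most 2γ.) -/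
lemma circulant_expansion_key (J α : ℕ) (i d : ℕ) (hi : i < J) (hd : d < J) :
      (((i + d) % J : ℕ) : ZMod (J + α)) - (i : ZMod (J + α)) = (d : ZMod (J + α)) ∨
      (((i + d) % J : ℕ) : ZMod (J + α)) - (i : ZMod (J + α)) =
        (d : ZMod (J + α)) + (α : ZMod (J + α)) := by
  rcases lt_or_ge (i + d) J with h | h
  · left; rw [Nat.mod_eq_of_lt h]; push_cast; ring
  · right
    have hmod : (i + d) % J = i + d - J := by
      rw [Nat.mod_eq_sub_mod h, Nat.mod_eq_of_lt (by omega)]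
    rw [hmod, Nat.cast_sub h]
    have hz : ((J : ZMod (J + α)) + (α : ZMod (J + α))) = 0 := by
      rw [← Nat.cast_add, ZMod.natCast_self]
    push_cast
    linear_combination -hz

/-- Correctness of the circulant-graph expansion used to handle a prime number of
nodes.  Every edge `(i, (i+d) mod J)` of the original order-`J` circulant graph,
viewed with labels in `ZMod (J+α)`, has difference equal to `d` or to `d + α`.
Consequently the circulant graph of order `J + α` with connection set
`L' = {d : d ∈ L} ∪ {d + α : d ∈ L}` contains every edge of the original graph,
and its regular degree `|L'|` is at most `2·|L|`. -/
theorem circulant_expansion_correct (J α : ℕ) (hJ : 0 < J) (hα : 0 < α)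
    (L : Finset ℕ) (hL : ∀ d ∈ L, d < J) :
    (∀ i : ℕ, i < J → ∀ d ∈ L,
      (((i + d) % J : ℕ) : ZMod (J + α)) - (i : ZMod (J + α)) = (d : ZMod (J + α)) ∨
      (((i + d) % J : ℕ) : ZMod (J + α)) - (i : ZMod (J + α)) =
        (d : ZMod (J + α)) + (α : ZMod (J + α))) ∧
    (∀ i : ℕ, i < J → ∀ d ∈ L,
      ∃ d' ∈ (L.image (fun d : ℕ => (d : ZMod (J + α)))) ∪
          (L.image (fun d : ℕ => (d : ZMod (J + α)) + (α : ZMod (J + α)))),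
        (((i + d) % J : ℕ) : ZMod (J + α)) = (i : ZMod (J + α)) + d') ∧
    ((L.image (fun d : ℕ => (d : ZMod (J + α)))) ∪
        (L.image (fun d : ℕ => (d : ZMod (J + α)) + (α : ZMod (J + α))))).card ≤
      2 * L.card := by
  refine ⟨fun i hi d hd => circulant_expansion_key J α i d hi (hL d hd), ?_, ?_⟩
  · intro i hi d hd
    rcases circulant_expansion_key J α i d hi (hL d hd) with h | h
    · exact ⟨(d : ZMod (J + α)), Finset.mem_union_left _ (Finset.mem_image_of_mem _ hd),
        by linear_combination h⟩
    · exact ⟨(d : ZMod (J + α)) + (α : ZMod (J + α)),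
        Finset.mem_union_right _ (Finset.mem_image_of_mem _ hd), by linear_combination h⟩
  · calc _ ≤ (L.image (fun d : ℕ => (d : ZMod (J + α)))).card +
          (L.image (fun d : ℕ => (d : ZMod (J + α)) + (α : ZMod (J + α)))).card :=
        Finset.card_union_le _ _
      _ ≤ L.card + L.card := add_le_add (Finset.card_image_le) (Finset.card_image_le)
      _ = 2 * L.card := (two_mul _).symm
end

section
/- Let K be a finite field with s elements, n ≥ 1, and V = Fin (n+1) → K. For every point P of P(n, K) (i.e., every K-subspace of V of finrank 1), the number of hyperplanes H of P(n, K) (subspaces of finrank n) with P ≤ H equals (s^n − 1)/(s − 1). Hence every point node of the point–hyperplane incidence bipartite graph has degree γ = (s^n − 1)/(s − 1), so this bipartite graph is γ-regular. -/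
/-!
Annihilators give an inclusion-reversing bijection between the subspaces of `V` and those of its
dual, exchanging dimension `k` with codimension `k`. The hyperplanes through a point `P` therefore
correspond to the lines of the dual contained in `P.dualAnnihilator`, that is, to the points of
the `n`-dimensional space `P.dualAnnihilator`, of which there are `(s^n - 1)/(s - 1)`.
-/

open Module

theorem Submodule.natCard_finrank_eq_one (K W : Type*) [Field K] [Finite K] [AddCommGroup W]
    [Module K W] [FiniteDimensional K W] :
    Nat.card {L : Submodule K W // finrank K L = 1} =
      (Nat.card K ^ finrank K W - 1) / (Nat.card K - 1) := by
  rw [← Nat.card_congr (Projectivization.equivSubmodule K W), Projectivization.card'',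
    Module.natCard_eq_pow_finrank (K := K)]

theorem Submodule.natCard_finrank_eq_and_le {R M : Type*} [Ring R] [AddCommGroup M] [Module R M]
    (p : Submodule R M) (k : ℕ) :
    Nat.card {q : Submodule R M // finrank R q = k ∧ q ≤ p} =
      Nat.card {q : Submodule R p // finrank R q = k} := by
  refine Nat.card_congr <| (Equiv.subtypeEquivRight fun _ => and_comm).trans <|
    (Equiv.subtypeSubtypeEquivSubtypeInter (· ≤ p) _).symm.trans <|
    (Equiv.subtypeEquiv (Submodule.MapSubtype.orderIso p).toEquiv fun q => ?_).symm
  exact (Submodule.finrank_map_subtype_eq p q).symm ▸ Iff.rfl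

theorem Subspace.natCard_finrank_eq_and_le_eq_dualAnnihilator {K V : Type*} [Field K]
    [AddCommGroup V] [Module K V] [FiniteDimensional K V] (P : Subspace K V) {k d : ℕ}
    (hkd : k + d = finrank K V) :
    Nat.card {H : Subspace K V // finrank K H = k ∧ P ≤ H} =
      Nat.card {L : Subspace K (Dual K V) // finrank K L = d ∧ L ≤ P.dualAnnihilator} := by
  refine Nat.card_congr (Equiv.subtypeEquiv
    (Subspace.orderIsoFiniteDimensional.toEquiv.trans OrderDual.ofDual) fun H => ?_)
  show _ ↔ finrank K H.dualAnnihilator = d ∧ H.dualAnnihilator ≤ P.dualAnnihilator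
  have := H.finrank_add_finrank_dualAnnihilator_eq
  rw [Subspace.dualAnnihilator_le_dualAnnihilator_iff]
  exact and_congr_left' ⟨fun _ => by omega, fun _ => by omega⟩

theorem pg_point_degree_general (K : Type*) [Field K] [Fintype K]
    (s n : ℕ) (hs : Fintype.card K = s)
    (P : Submodule K (Fin (n + 1) → K)) (hP : Module.finrank K P = 1) :
    Nat.card {H : Submodule K (Fin (n + 1) → K) //
      Module.finrank K H = n ∧ P ≤ H} = (s ^ n - 1) / (s - 1) := by
  have hPann : finrank K P.dualAnnihilator = n := by
    have := Subspace.finrank_add_finrank_dualAnnihilator_eq P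
    rw [hP, finrank_fin_fun] at this
    omega
  rw [Subspace.natCard_finrank_eq_and_le_eq_dualAnnihilator P (finrank_fin_fun K).symm,
    Submodule.natCard_finrank_eq_and_le,
    Submodule.natCard_finrank_eq_one K P.dualAnnihilator, hPann, Nat.card_eq_fintype_card, hs]

/-- Every point node of the point–hyperplane incidence bipartite graph of
`P(n, K)` has degree `γ = (s^n - 1)/(s - 1)`, so the graph is `γ`-regular: for
every `K`-subspace `P` of `V = Fin (n+1) → K` with `finrank P = 1`, the number
of `n`-dimensional subspaces `H` with `P ≤ H` equals `(s^n - 1)/(s - 1)`, where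
`s = |K|`. -/
theorem pg_point_degree (K : Type*) [Field K] [Fintype K]
    (s n : ℕ) (hs : Fintype.card K = s) (hn : 1 ≤ n)
    (P : Submodule K (Fin (n + 1) → K)) (hP : Module.finrank K P = 1) :
    Nat.card {H : Submodule K (Fin (n + 1) → K) //
      Module.finrank K H = n ∧ P ≤ H} = (s ^ n - 1) / (s - 1) :=
  pg_point_degree_general K s n hs P hP
end

section
/- Let K be a finite field with s elements, n ≥ 1, V = Fin (n+1) → K, and J = (s^{n+1} − 1)/(s − 1). There exist bijections σ from the set of points of P(n, K) (1-dimensional subspaces of V) to ZMod J and τ from the set of hyperplanes of P(n, K) (n-dimensional subspaces of V) to ZMod J, together with a subset S ⊆ ZMod J, such that for every point P and hyperplane H, P ≤ H if and only if τ(H) − σ(P) ∈ S. (The point–hyperplane incidence bipartite graph of a finite projective space is a circulant balanced bipartite graph.) -/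
/-!
Singer's construction. Realise `V` as a field extension `F` of `K` of degree `n + 1`. The cyclic
group `Fˣ` acts on `F` by `K`-linear maps, and `Fˣ ⧸ Kˣ`, cyclic of order `J`, acts simply
transitively on the points `K ∙ u`. Hyperplanes are the trace-orthogonals `(K ∙ a)ᗮ` of points,
and `K ∙ u ≤ (K ∙ a)ᗮ` iff `trace (a * u) = 0`, a condition on the class of `a * u` alone, that is,
on the difference of the labels of `(K ∙ a)ᗮ` and `K ∙ u` once hyperplanes are labelled by minus
the label of their orthogonal point.
-/

open Module

def IncidenceIsCirculant (K V : Type*) [Field K] [AddCommGroup V] [Module K V] (n J : ℕ) : Prop :=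
  ∃ (σ : {P : Submodule K V // finrank K P = 1} → ZMod J)
    (τ : {H : Submodule K V // finrank K H = n} → ZMod J) (S : Set (ZMod J)),
    Function.Bijective σ ∧ Function.Bijective τ ∧
      ∀ (P : {P : Submodule K V // finrank K P = 1}) (H : {H : Submodule K V // finrank K H = n}),
        (P : Submodule K V) ≤ (H : Submodule K V) ↔ τ H - σ P ∈ S

section Transport

variable {K V W : Type*} [Field K] [AddCommGroup V] [Module K V] [AddCommGroup W] [Module K W]

def LinearEquiv.finrankSubmoduleEquiv (e : V ≃ₗ[K] W) (d : ℕ) :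
    {P : Submodule K V // finrank K P = d} ≃ {P : Submodule K W // finrank K P = d} :=
  (Submodule.orderIsoMapComap e).toEquiv.subtypeEquiv fun P => by
    change _ ↔ finrank K (P.map (e : V →ₗ[K] W)) = d
    rw [LinearEquiv.finrank_map_eq]

theorem IncidenceIsCirculant.of_linearEquiv {n J : ℕ} (e : V ≃ₗ[K] W)
    (h : IncidenceIsCirculant K W n J) : IncidenceIsCirculant K V n J := by
  obtain ⟨σ, τ, S, hσ, hτ, hinc⟩ := h
  refine ⟨σ ∘ e.finrankSubmoduleEquiv 1, τ ∘ e.finrankSubmoduleEquiv n, S,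
    hσ.comp (Equiv.bijective _), hτ.comp (Equiv.bijective _), fun P H => ?_⟩
  exact (Submodule.orderIsoMapComap e).le_iff_le.symm.trans
    (hinc (e.finrankSubmoduleEquiv 1 P) (e.finrankSubmoduleEquiv n H))

end Transport

namespace LinearMap.BilinForm

variable {K V : Type*} [Field K] [AddCommGroup V] [Module K V] [FiniteDimensional K V]
  {B : LinearMap.BilinForm K V}

def orthogonalFinrankEquiv (hB : B.Nondegenerate) (hB₀ : B.IsRefl) {d e : ℕ}
    (hde : d + e = finrank K V) :
    {W : Submodule K V // finrank K W = d} ≃ {W : Submodule K V // finrank K W = e} where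
  toFun W := ⟨B.orthogonal W, by rw [finrank_orthogonal hB, W.2]; omega⟩
  invFun W := ⟨B.orthogonal W, by rw [finrank_orthogonal hB, W.2]; omega⟩
  left_inv W := Subtype.ext (orthogonal_orthogonal hB hB₀ W)
  right_inv W := Subtype.ext (orthogonal_orthogonal hB hB₀ W)

end LinearMap.BilinForm

theorem Subgroup.exists_surjective_ker_eq_of_isCyclic {G : Type*} [Group G] (N : Subgroup G)
    [N.Normal] [hc : IsCyclic (G ⧸ N)] :
    ∃ ℓ : G →* Multiplicative (ZMod (Nat.card (G ⧸ N))), Function.Surjective ℓ ∧ ℓ.ker = N := by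
  let e := zmodCyclicMulEquiv hc
  refine ⟨e.symm.toMonoidHom.comp (QuotientGroup.mk' N),
    e.symm.surjective.comp (QuotientGroup.mk'_surjective N), ?_⟩
  ext g
  simp

section FiniteField

variable (K F : Type*) [Field K] [Field F] [Algebra K F]

theorem exists_units_eq_span_singleton {P : Submodule K F} (hP : finrank K P = 1) :
    ∃ u : Fˣ, P = K ∙ (u : F) := by
  obtain ⟨p, hp⟩ := (Projectivization.equivSubmodule K F).surjective ⟨P, hP⟩
  induction p using Projectivization.ind with
  | h v hv => exact ⟨Units.mk0 v hv, (congrArg Subtype.val hp).symm⟩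

theorem card_units_quotient_units_map [Finite F] :
    Nat.card (Fˣ ⧸ (Units.map (algebraMap K F : K →* F)).range) =
      (Nat.card F - 1) / (Nat.card K - 1) := by
  have : Finite K := Finite.of_injective _ (algebraMap K F).injective
  have hrange : Nat.card (Units.map (algebraMap K F : K →* F)).range = Nat.card K - 1 := by
    rw [← Nat.card_units K]
    exact (Nat.card_congr (MonoidHom.ofInjective
      (Units.map_injective (algebraMap K F).injective)).toEquiv).symm
  have hK : 0 < Nat.card K - 1 := Nat.sub_pos_of_lt Finite.one_lt_card
  rw [← Nat.card_units F,
    Subgroup.card_eq_card_quotient_mul_card_subgroup (Units.map (algebraMap K F : K →* F)).range,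
    hrange, Nat.mul_div_cancel _ hK]

end FiniteField

section Singer

variable {K F : Type*} [Field K] [Field F] [Algebra K F] {G : Type*} [Group G] {ℓ : Fˣ →* G}

theorem map_eq_map_iff_exists_smul (hker : ℓ.ker = (Units.map (algebraMap K F : K →* F)).range)
    {u w : Fˣ} : ℓ u = ℓ w ↔ ∃ c : Kˣ, c • (w : F) = u := by
  rw [ℓ.eq_iff, hker]
  refine exists_congr fun c => ?_
  rw [eq_inv_mul_iff_mul_eq, mul_comm, Units.ext_iff, Units.smul_def, Algebra.smul_def]
  rfl

theorem trace_eq_zero_iff_of_map_eq (hker : ℓ.ker = (Units.map (algebraMap K F : K →* F)).range)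
    {u w : Fˣ} (h : ℓ u = ℓ w) : Algebra.trace K F u = 0 ↔ Algebra.trace K F w = 0 := by
  obtain ⟨c, hc⟩ := (map_eq_map_iff_exists_smul hker).mp h
  rw [← hc, Units.smul_def, map_smul, smul_eq_zero_iff_right c.ne_zero]

theorem exists_bijective_finrank_eq_one_of_ker_eq (hℓ : Function.Surjective ℓ)
    (hker : ℓ.ker = (Units.map (algebraMap K F : K →* F)).range) :
    ∃ σ : {P : Submodule K F // finrank K P = 1} → G, Function.Bijective σ ∧
      ∀ u : Fˣ, σ ⟨K ∙ (u : F), finrank_span_singleton u.ne_zero⟩ = ℓ u := by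
  let σ₀ : Projectivization K F → G := Projectivization.lift (fun v => ℓ (Units.mk0 v v.2))
    fun v w t hvw => (map_eq_map_iff_exists_smul hker).mpr
      ⟨Units.mk0 t (left_ne_zero_of_smul (hvw ▸ v.2)), hvw.symm⟩
  have hσ₀ : Function.Bijective σ₀ := by
    refine ⟨fun p q hpq => ?_, fun g => ?_⟩
    · induction p using Projectivization.ind with | h v hv =>
      induction q using Projectivization.ind with | h w hw =>
      exact (Projectivization.mk_eq_mk_iff K v w hv hw).mpr
        ((map_eq_map_iff_exists_smul hker).mp hpq)
    · obtain ⟨u, rfl⟩ := hℓ g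
      exact ⟨Projectivization.mk K (u : F) u.ne_zero, by simp [σ₀]⟩
  refine ⟨σ₀ ∘ (Projectivization.equivSubmodule K F).symm,
    hσ₀.comp (Projectivization.equivSubmodule K F).symm.bijective, fun u => ?_⟩
  have : (Projectivization.equivSubmodule K F).symm
      ⟨K ∙ (u : F), finrank_span_singleton u.ne_zero⟩ = Projectivization.mk K (u : F) u.ne_zero := by
    rw [Equiv.symm_apply_eq]; rfl
  simp [this, σ₀]

end Singer

open LinearMap.BilinForm in
theorem incidenceIsCirculant_of_finrank_eq (K F : Type*) [Field K] [Field F] [Finite F]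
    [Algebra K F] {n : ℕ} (hF : finrank K F = n + 1) :
    IncidenceIsCirculant K F n ((Nat.card F - 1) / (Nat.card K - 1)) := by
  obtain ⟨ℓ, hℓ, hker⟩ : ∃ ℓ : Fˣ →* Multiplicative (ZMod ((Nat.card F - 1) / (Nat.card K - 1))),
      Function.Surjective ℓ ∧ ℓ.ker = (Units.map (algebraMap K F : K →* F)).range :=
    card_units_quotient_units_map K F ▸ Subgroup.exists_surjective_ker_eq_of_isCyclic _
  obtain ⟨σ, hσ, hσ_span⟩ := exists_bijective_finrank_eq_one_of_ker_eq hℓ hker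
  have hB := traceForm_nondegenerate K F
  have hB₀ := (Algebra.traceForm_isSymm K (S := F)).isRefl
  let ω := orthogonalFinrankEquiv hB hB₀ (d := n) (e := 1) (by omega)
  refine ⟨fun P => (σ P).toAdd, fun H => -(σ (ω H)).toAdd,
    {d | ∃ y : Fˣ, ℓ y = .ofAdd (-d) ∧ Algebra.trace K F y = 0},
    Multiplicative.toAdd.bijective.comp hσ,
    neg_involutive.bijective.comp (Multiplicative.toAdd.bijective.comp (hσ.comp ω.bijective)),
    fun P H => ?_⟩
  obtain ⟨u, hu⟩ := exists_units_eq_span_singleton K F P.2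
  obtain ⟨a, ha⟩ := exists_units_eq_span_singleton K F (ω H).2
  have hσP : σ P = ℓ u := by rw [← hσ_span]; exact congrArg σ (Subtype.ext hu)
  have hσH : σ (ω H) = ℓ a := by rw [← hσ_span]; exact congrArg σ (Subtype.ext ha)
  have hH : (H : Submodule K F) = (Algebra.traceForm K F).orthogonal (K ∙ (a : F)) := by
    rw [← ha]; exact (orthogonal_orthogonal hB hB₀ H).symm
  have hdiff : Multiplicative.ofAdd (-(-(σ (ω H)).toAdd - (σ P).toAdd)) = ℓ (a * u) := by
    rw [hσP, hσH, neg_sub, sub_neg_eq_add, mul_comm, map_mul]; rfl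
  have hincidence : (P : Submodule K F) ≤ H ↔ Algebra.trace K F (a * u : Fˣ) = 0 := by
    rw [hu, hH, Submodule.span_singleton_le_iff_mem, orthogonal_span_singleton_eq_toLin_ker,
      LinearMap.mem_ker]
    rfl
  rw [hincidence]
  exact ⟨fun h => ⟨a * u, hdiff.symm, h⟩,
    fun ⟨y, hy, hy0⟩ => (trace_eq_zero_iff_of_map_eq hker (hy.trans hdiff)).mp hy0⟩

theorem pg_bipartite_graph_circulant_general (K : Type*) [Field K] [Fintype K]
    (s n J : ℕ) (hs : Fintype.card K = s)
    (hJ : J = (s ^ (n + 1) - 1) / (s - 1)) :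
    ∃ (σ : {P : Submodule K (Fin (n + 1) → K) // Module.finrank K P = 1} → ZMod J)
      (τ : {H : Submodule K (Fin (n + 1) → K) // Module.finrank K H = n} → ZMod J)
      (S : Set (ZMod J)),
      Function.Bijective σ ∧ Function.Bijective τ ∧
      ∀ (P : {P : Submodule K (Fin (n + 1) → K) // Module.finrank K P = 1})
        (H : {H : Submodule K (Fin (n + 1) → K) // Module.finrank K H = n}),
        (P : Submodule K (Fin (n + 1) → K)) ≤ (H : Submodule K (Fin (n + 1) → K)) ↔
          τ H - σ P ∈ S := by
  obtain ⟨p, _⟩ := CharP.exists K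
  have : Fact p.Prime := ⟨CharP.char_is_prime K p⟩
  let F := FiniteField.Extension K p (n + 1)
  have hF : finrank K F = n + 1 := FiniteField.finrank_extension K p (n + 1)
  have hJF : J = (Nat.card F - 1) / (Nat.card K - 1) := by
    rw [hJ, ← hs, Fintype.card_eq_nat_card, natCard_eq_pow_finrank (K := K) (V := F), hF]
  subst hJF
  exact (incidenceIsCirculant_of_finrank_eq K F hF).of_linearEquiv
    (LinearEquiv.ofFinrankEq _ _ (by rw [finrank_fin_fun, hF]))

/-- The point–hyperplane incidence bipartite graph of a finite projective space
is a circulant balanced bipartite graph: with `J = (s^(n+1) - 1)/(s - 1)` there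
exist bijections `σ` (from points, the 1-dimensional subspaces of
`V = Fin (n+1) → K`, to `ZMod J`) and `τ` (from hyperplanes, the `n`-dimensional
subspaces, to `ZMod J`) and a subset `S ⊆ ZMod J` such that `P ≤ H` iff
`τ(H) - σ(P) ∈ S`. -/
theorem pg_bipartite_graph_circulant (K : Type*) [Field K] [Fintype K]
    (s n J : ℕ) (hs : Fintype.card K = s) (hn : 1 ≤ n)
    (hJ : J = (s ^ (n + 1) - 1) / (s - 1)) :
    ∃ (σ : {P : Submodule K (Fin (n + 1) → K) // Module.finrank K P = 1} → ZMod J)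
      (τ : {H : Submodule K (Fin (n + 1) → K) // Module.finrank K H = n} → ZMod J)
      (S : Set (ZMod J)),
      Function.Bijective σ ∧ Function.Bijective τ ∧
      ∀ (P : {P : Submodule K (Fin (n + 1) → K) // Module.finrank K P = 1})
        (H : {H : Submodule K (Fin (n + 1) → K) // Module.finrank K H = n}),
        (P : Submodule K (Fin (n + 1) → K)) ≤ (H : Submodule K (Fin (n + 1) → K)) ↔
          τ H - σ P ∈ S :=
  pg_bipartite_graph_circulant_general K s n J hs hJ
end

section
/- Let K be a finite field with s elements, V = Fin (d+1) → K, and 0 ≤ m ≤ d. Then the number of m-dimensional projective subspaces of P(d, K), i.e., the number of K-subspaces of V of finrank m+1, equals φ(d, m, s) = ((s^{d+1} − 1)(s^d − 1)⋯(s^{d−m+1} − 1)) / ((s − 1)(s² − 1)⋯(s^{m+1} − 1)); equivalently, that count multiplied by ∏_{i=0}^{m} (s^{i+1} − 1) equals ∏_{i=0}^{m} (s^{d+1−i} − 1). -/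
/-!
Count pairs `(W, s)` with `s` an ordered basis of a `k`-dimensional subspace `W`. Every linearly
independent `k`-tuple of vectors spans exactly one such `W`, and each `W` has
`∏_{i<k} (q^k - q^i)` ordered bases, so
`#{W} · ∏_{i<k} (q^k - q^i) = ∏_{i<k} (q^n - q^i)`.
Factoring `q^i` out of the `i`-th factor on both sides leaves the Gaussian-binomial identity.
-/

open Module Submodule Finset

theorem prod_pow_sub_pow_eq_mul_prod_pow_sub_one (q : ℕ) {k n : ℕ} (hk : k ≤ n) :
    ∏ i : Fin k, (q ^ n - q ^ i.1) =
      (∏ i ∈ range k, q ^ i) * ∏ i ∈ range k, (q ^ (n - i) - 1) := by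
  rw [Fin.prod_univ_eq_prod_range (fun i => q ^ n - q ^ i), ← prod_mul_distrib]
  refine prod_congr rfl fun i hi => ?_
  rw [Nat.mul_sub, mul_one, ← pow_add, Nat.add_sub_of_le (by grind)]

theorem prod_range_pow_sub_sub_one (q k : ℕ) :
    ∏ i ∈ range k, (q ^ (k - i) - 1) = ∏ i ∈ range k, (q ^ (i + 1) - 1) := by
  rw [← prod_range_reflect (fun i => q ^ (i + 1) - 1)]
  exact prod_congr rfl fun i hi => by grind

section Counting

variable {K V : Type*} [DivisionRing K] [AddCommGroup V] [Module K V]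

noncomputable def linearIndependentSpanEqEquiv [FiniteDimensional K V] {k : ℕ}
    (W : Submodule K V) (hW : finrank K W = k) :
    {s : {s : Fin k → V // LinearIndependent K s} // span K (Set.range s.1) = W} ≃
      {t : Fin k → W // LinearIndependent K t} where
  toFun s := ⟨fun i => ⟨s.1.1 i, s.2.le (subset_span (Set.mem_range_self i))⟩,
    s.1.2.of_comp W.subtype⟩
  invFun t := ⟨⟨fun i => t.1 i, t.2.map' W.subtype (ker_subtype W)⟩, by
    have hspan : span K (Set.range t.1) = ⊤ :=
      eq_top_of_finrank_eq (by rw [finrank_span_eq_card t.2, Fintype.card_fin, hW])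
    rw [show Set.range (fun i => (t.1 i : V)) = W.subtype '' Set.range t.1 from
      Set.range_comp .., ← map_span, hspan, map_subtype_top]⟩
  left_inv _ := rfl
  right_inv _ := rfl

variable [Fintype K] [Finite V]

theorem card_linearIndependent_eq_card_finrank_mul {k : ℕ} (hk : k ≤ finrank K V) :
    ∏ i : Fin k, (Fintype.card K ^ finrank K V - Fintype.card K ^ i.1) =
      Nat.card {W : Submodule K V // finrank K W = k} *
        ∏ i : Fin k, (Fintype.card K ^ k - Fintype.card K ^ i.1) := by
  have := Fintype.ofFinite {W : Submodule K V // finrank K W = k}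
  let spanOf (s : {s : Fin k → V // LinearIndependent K s}) :
      {W : Submodule K V // finrank K W = k} :=
    ⟨span K (Set.range s.1), by rw [finrank_span_eq_card s.2, Fintype.card_fin]⟩
  have hfiber (W : {W : Submodule K V // finrank K W = k}) :
      Nat.card {s // spanOf s = W} =
        ∏ i : Fin k, (Fintype.card K ^ k - Fintype.card K ^ i.1) := by
    have hbases := card_linearIndependent (K := K) (V := W.1) W.2.ge
    rw [W.2] at hbases
    rw [← hbases]
    exact Nat.card_congr <| (Equiv.subtypeEquivRight fun _ => Subtype.ext_iff).trans
      (linearIndependentSpanEqEquiv W.1 W.2)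
  rw [← card_linearIndependent hk, ← Nat.card_congr (Equiv.sigmaFiberEquiv spanOf),
    Nat.card_sigma, sum_congr rfl fun W _ => hfiber W, sum_const, card_univ, smul_eq_mul,
    Nat.card_eq_fintype_card]

theorem card_finrank_eq_mul_prod_pow_sub_one {k : ℕ} (hk : k ≤ finrank K V) :
    Nat.card {W : Submodule K V // finrank K W = k} *
        ∏ i ∈ range k, (Fintype.card K ^ (i + 1) - 1) =
      ∏ i ∈ range k, (Fintype.card K ^ (finrank K V - i) - 1) := by
  have hcount := card_linearIndependent_eq_card_finrank_mul (K := K) (V := V) hk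
  rw [prod_pow_sub_pow_eq_mul_prod_pow_sub_one _ hk,
    prod_pow_sub_pow_eq_mul_prod_pow_sub_one _ le_rfl, prod_range_pow_sub_sub_one,
    mul_left_comm] at hcount
  exact (Nat.eq_of_mul_eq_mul_left (prod_pos fun i _ => pow_pos Fintype.card_pos i)
    hcount).symm

end Counting

/-- The number of `m`-dimensional projective subspaces of `P(d, K)` (the
`K`-subspaces of `V = Fin (d+1) → K` of finrank `m+1`) equals
`φ(d, m, s) = ((s^(d+1) − 1)⋯(s^(d−m+1) − 1)) / ((s − 1)⋯(s^(m+1) − 1))`;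
equivalently, that count multiplied by `∏_{i=0}^{m} (s^(i+1) − 1)` equals
`∏_{i=0}^{m} (s^(d+1−i) − 1)`.  Here `s = |K|`. -/
theorem card_projective_subspaces (K : Type*) [Field K] [Fintype K]
    (s d m : ℕ) (hs : Fintype.card K = s) (hm : m ≤ d) :
    Nat.card {W : Submodule K (Fin (d + 1) → K) // Module.finrank K W = m + 1} *
        ∏ i ∈ Finset.range (m + 1), (s ^ (i + 1) - 1) =
      ∏ i ∈ Finset.range (m + 1), (s ^ (d + 1 - i) - 1) ∧
    Nat.card {W : Submodule K (Fin (d + 1) → K) // Module.finrank K W = m + 1} =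
      (∏ i ∈ Finset.range (m + 1), (s ^ (d + 1 - i) - 1)) /
        ∏ i ∈ Finset.range (m + 1), (s ^ (i + 1) - 1) := by
  have hcount := card_finrank_eq_mul_prod_pow_sub_one (K := K) (V := Fin (d + 1) → K)
    (k := m + 1) (by rw [finrank_fin_fun]; omega)
  rw [finrank_fin_fun, hs] at hcount
  have hs_gt_one : 1 < s := hs ▸ Fintype.one_lt_card
  have hden_pos : 0 < ∏ i ∈ range (m + 1), (s ^ (i + 1) - 1) :=
    prod_pos fun i _ => Nat.sub_pos_of_lt (Nat.one_lt_pow i.succ_ne_zero hs_gt_one)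
  exact ⟨hcount, Nat.eq_div_of_mul_eq_left hden_pos.ne' hcount⟩
end

section
/- Let K be a finite field with s elements, V = Fin (d+1) → K, and 0 ≤ l < m ≤ d. For every K-subspace W of V with finrank W = m+1 (an m-dimensional projective subspace of P(d, K)), the number of K-subspaces U of V with finrank U = l+1 and U ≤ W equals φ(m, l, s); equivalently, that count multiplied by ∏_{i=0}^{l} (s^{i+1} − 1) equals ∏_{i=0}^{l} (s^{m+1−i} − 1). -/
/-!
Count the linearly independent `k`-tuples in an `n`-dimensional space over a field with `q`
elements in two ways: directly there are `∏_{i<k} (q^n - q^i)` of them, and grouped by their span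
each `k`-dimensional subspace carries `∏_{i<k} (q^k - q^i)` of them. Writing
`q^a - q^i = q^i (q^(a-i) - 1)` and cancelling `q^(0 + ⋯ + (k-1))` gives the Gaussian binomial
count, applied to the subspaces of `W` with `n = m + 1`, `k = l + 1`.
-/

open Module

theorem Nat.card_eq_card_mul_of_card_fiber {α β : Type*} [Finite α] [Finite β] (f : α → β)
    {c : ℕ} (hc : ∀ b, Nat.card {a // f a = b} = c) : Nat.card α = Nat.card β * c := by
  have := Fintype.ofFinite β
  rw [Nat.card_congr (Equiv.sigmaFiberEquiv f).symm, Nat.card_sigma,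
    Finset.sum_congr rfl fun b _ => hc b, Finset.sum_const, smul_eq_mul, Finset.card_univ,
    Nat.card_eq_fintype_card]

-- With truncated subtraction this also holds for `i > a`, where both sides vanish.
theorem Nat.pow_sub_pow_eq_pow_mul {q : ℕ} (hq : 0 < q) (a i : ℕ) :
    q ^ a - q ^ i = q ^ i * (q ^ (a - i) - 1) := by
  rcases le_or_gt i a with hia | hai
  · rw [Nat.mul_sub_one, ← pow_add, Nat.add_sub_cancel' hia]
  · rw [Nat.sub_eq_zero_of_le hai.le, pow_zero, Nat.sub_self, mul_zero,
      Nat.sub_eq_zero_of_le (Nat.pow_le_pow_right hq hai.le)]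

theorem Nat.prod_range_pow_sub_pow {q : ℕ} (hq : 0 < q) (a k : ℕ) :
    ∏ i ∈ Finset.range k, (q ^ a - q ^ i) =
      q ^ (∑ i ∈ Finset.range k, i) * ∏ i ∈ Finset.range k, (q ^ (a - i) - 1) := by
  rw [← Finset.prod_pow_eq_pow_sum, ← Finset.prod_mul_distrib]
  exact Finset.prod_congr rfl fun i _ => Nat.pow_sub_pow_eq_pow_mul hq a i

theorem Nat.prod_range_pow_sub_pow_self {q : ℕ} (hq : 0 < q) (k : ℕ) :
    ∏ i ∈ Finset.range k, (q ^ k - q ^ i) =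
      q ^ (∑ i ∈ Finset.range k, i) * ∏ i ∈ Finset.range k, (q ^ (i + 1) - 1) := by
  rw [Nat.prod_range_pow_sub_pow hq, ← Finset.prod_range_reflect (fun i => q ^ (i + 1) - 1)]
  congr 1
  refine Finset.prod_congr rfl fun i hi => ?_
  rw [Finset.mem_range] at hi
  congr 2
  omega

section FiniteField

variable {K V : Type*} [Field K] [AddCommGroup V] [Module K V] [Fintype K] [Finite V]

theorem card_linearIndependent_fin (k : ℕ) :
    Nat.card {s : Fin k → V // LinearIndependent K s} =
      ∏ i ∈ Finset.range k, (Fintype.card K ^ finrank K V - Fintype.card K ^ i) := by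
  by_cases hk : k ≤ finrank K V
  · rw [card_linearIndependent hk, Fin.prod_univ_eq_prod_range
      (fun i => Fintype.card K ^ finrank K V - Fintype.card K ^ i)]
  · have : IsEmpty {s : Fin k → V // LinearIndependent K s} :=
      ⟨fun s => hk (by simpa using s.2.fintype_card_le_finrank)⟩
    rw [Nat.card_of_isEmpty, eq_comm]
    exact Finset.prod_eq_zero (Finset.mem_range.2 (not_le.1 hk)) (Nat.sub_self _)

variable (K V) in
def linearIndependentSpan (k : ℕ) :
    {s : Fin k → V // LinearIndependent K s} → {U : Submodule K V // finrank K U = k} :=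
  fun s => ⟨Submodule.span K (Set.range s.1), by rw [finrank_span_eq_card s.2, Fintype.card_fin]⟩

def linearIndependentSpanFiberEquiv {k : ℕ} (U : {U : Submodule K V // finrank K U = k}) :
    {s // linearIndependentSpan K V k s = U} ≃ {t : Fin k → U.1 // LinearIndependent K t} where
  toFun s := ⟨fun i => ⟨s.1.1 i, congrArg Subtype.val s.2 ▸ Submodule.subset_span ⟨i, rfl⟩⟩,
    (U.1.subtype.linearIndependent_iff (Submodule.ker_subtype _)).1 s.1.2⟩
  invFun t := ⟨⟨U.1.subtype ∘ t.1, t.2.map' U.1.subtype (Submodule.ker_subtype _)⟩, by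
    refine Subtype.ext (Submodule.eq_of_le_of_finrank_le ?_ ?_)
    · exact Submodule.span_le.2 (Set.range_subset_iff.2 fun i => (t.1 i).2)
    · rw [linearIndependentSpan, finrank_span_eq_card (t.2.map' _ (Submodule.ker_subtype _)),
        Fintype.card_fin, U.2]⟩
  left_inv _ := rfl
  right_inv _ := rfl

theorem card_submodule_finrank_eq_mul (k : ℕ) :
    Nat.card {U : Submodule K V // finrank K U = k} *
        ∏ i ∈ Finset.range k, (Fintype.card K ^ k - Fintype.card K ^ i) =
      ∏ i ∈ Finset.range k, (Fintype.card K ^ finrank K V - Fintype.card K ^ i) := by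
  rw [← card_linearIndependent_fin,
    Nat.card_eq_card_mul_of_card_fiber (linearIndependentSpan K V k)]
  intro U
  rw [Nat.card_congr (linearIndependentSpanFiberEquiv U), card_linearIndependent_fin, U.2]

end FiniteField

theorem Submodule.card_finrank_eq_and_le {K V : Type*} [Field K] [AddCommGroup V] [Module K V]
    (W : Submodule K V) (k : ℕ) :
    Nat.card {U : Submodule K V // finrank K U = k ∧ U ≤ W} =
      Nat.card {U : Submodule K W // finrank K U = k} := by
  refine Nat.card_congr ((Equiv.subtypeEquiv (MapSubtype.orderIso W).toEquiv fun U => ?_).trans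
    ((Equiv.subtypeSubtypeEquivSubtypeInter (· ≤ W) (finrank K · = k)).trans
      (Equiv.subtypeEquivRight fun _ => and_comm))).symm
  exact (finrank_map_subtype_eq W U).symm ▸ Iff.rfl

theorem card_subspaces_contained_general (K : Type*) [Field K] [Fintype K]
    (s d l m : ℕ) (hs : Fintype.card K = s)
    (W : Submodule K (Fin (d + 1) → K)) (hW : Module.finrank K W = m + 1) :
    Nat.card {U : Submodule K (Fin (d + 1) → K) //
          Module.finrank K U = l + 1 ∧ U ≤ W} *
        ∏ i ∈ Finset.range (l + 1), (s ^ (i + 1) - 1) =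
      ∏ i ∈ Finset.range (l + 1), (s ^ (m + 1 - i) - 1) ∧
    Nat.card {U : Submodule K (Fin (d + 1) → K) //
        Module.finrank K U = l + 1 ∧ U ≤ W} =
      (∏ i ∈ Finset.range (l + 1), (s ^ (m + 1 - i) - 1)) /
        ∏ i ∈ Finset.range (l + 1), (s ^ (i + 1) - 1) := by
  have hs1 : 1 < s := hs ▸ Fintype.one_lt_card
  have hcount := card_submodule_finrank_eq_mul (K := K) (V := W) (l + 1)
  rw [hW, hs, Nat.prod_range_pow_sub_pow_self (by omega), Nat.prod_range_pow_sub_pow (by omega),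
    mul_left_comm, ← W.card_finrank_eq_and_le] at hcount
  have hmain := Nat.eq_of_mul_eq_mul_left (by positivity) hcount
  refine ⟨hmain, ?_⟩
  have hpos : 0 < ∏ i ∈ Finset.range (l + 1), (s ^ (i + 1) - 1) :=
    Finset.prod_pos fun i _ => Nat.sub_pos_of_lt (Nat.one_lt_pow i.succ_ne_zero hs1)
  rw [← hmain, Nat.mul_div_cancel _ hpos]

/-- For every `m`-dimensional projective subspace `W` of `P(d, K)` (a `K`-subspace
of `V = Fin (d+1) → K` of finrank `m+1`), the number of `l`-dimensional projective
subspaces `U` contained in `W` (finrank `l+1`, `U ≤ W`) equals `φ(m, l, s)`;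
equivalently, that count multiplied by `∏_{i=0}^{l} (s^(i+1) − 1)` equals
`∏_{i=0}^{l} (s^(m+1−i) − 1)`.  Here `s = |K|`. -/
theorem card_subspaces_contained (K : Type*) [Field K] [Fintype K]
    (s d l m : ℕ) (hs : Fintype.card K = s) (hlm : l < m) (hmd : m ≤ d)
    (W : Submodule K (Fin (d + 1) → K)) (hW : Module.finrank K W = m + 1) :
    Nat.card {U : Submodule K (Fin (d + 1) → K) //
          Module.finrank K U = l + 1 ∧ U ≤ W} *
        ∏ i ∈ Finset.range (l + 1), (s ^ (i + 1) - 1) =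
      ∏ i ∈ Finset.range (l + 1), (s ^ (m + 1 - i) - 1) ∧
    Nat.card {U : Submodule K (Fin (d + 1) → K) //
        Module.finrank K U = l + 1 ∧ U ≤ W} =
      (∏ i ∈ Finset.range (l + 1), (s ^ (m + 1 - i) - 1)) /
        ∏ i ∈ Finset.range (l + 1), (s ^ (i + 1) - 1) :=
  card_subspaces_contained_general K s d l m hs W hW
end
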